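/- Multiplication formula: for any positive integer w, any x ∈ R, and any n ≥ 0: w · B_{n,q}(w·x) = w^n · Σ_{i=0}^{w−1} q^i · B_{n,q^w}(x + i/w). -/

import Mathlib

open Finset

/-- The q-analogue of power sums: `S_{k,q}(m) = Σ_{i=0}^m i^k q^i` (with `0^0 = 1`). -/
def qS {R : Type*} [CommRing R] (q : R) (k m : ℕ) : R :=
  ∑ i ∈ Finset.range (m + 1), (i : R) ^ k * q ^ i

/-- q-Bernoulli numbers `b_n(q, L)`: `(q-1) b_0 = L` and for `n ≥ 1`,
`(q-1) b_n = [n = 1] - q Σ_{k<n} C(n,k) b_k`. -/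
noncomputable def qb {R : Type*} [CommRing R] (q L : R) : ℕ → R
  | 0 => Ring.inverse (q - 1) * L
  | n + 1 =>
      Ring.inverse (q - 1) *
        ((if n + 1 = 1 then (1 : R) else 0) -
          q * ∑ k ∈ (Finset.range (n + 1)).attach,
              ((n + 1).choose k.1 : R) * qb q L k.1)
  termination_by n => n
  decreasing_by exact Finset.mem_range.mp k.2

/-- q-Bernoulli polynomials `B_{n,q}(x) = Σ_{k=0}^n C(n,k) b_k(q,L) x^{n-k}`. -/
noncomputable def qB {R : Type*} [CommRing R] (q L : R) (n : ℕ) (x : R) : R :=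
  ∑ k ∈ Finset.range (n + 1), (n.choose k : R) * qb q L k * x ^ (n - k)

/-!
The exponential generating function of `b_n(q, L)` is `F(t) = (t + L) / (q eᵗ - 1)`, and that of
`B_{n,q}(x)` is `F(t) e^{xt}`. Writing `G` for the generating function of `b_n(q^w, wL)`, the
geometric sum `Σ_{i<w} (q eᵗ)ⁱ (q eᵗ - 1) = q^w e^{wt} - 1` turns
`G(wt) = w (t + L) / (q^w e^{wt} - 1)` into `w F(t) = G(wt) Σ_{i<w} qⁱ e^{it}`. Multiplying by
`e^{wxt}` gives the multiplication formula coefficientwise, since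
`e^{it} e^{wxt} = e^{w (x + i/w) t}`.
-/

open PowerSeries
open scoped Nat

namespace PowerSeries

variable {R : Type*} [CommRing R]

theorem rescale_C (a c : R) : rescale a (C c) = C c := by
  ext n
  cases n <;> simp [coeff_C]

variable [Algebra ℚ R]

noncomputable def egf : (ℕ → R) →ₗ[R] R⟦X⟧ where
  toFun a := mk fun n => algebraMap ℚ R (1 / n !) * a n
  map_add' a b := by ext n; simp [mul_add]
  map_smul' c a := by ext n; simp [mul_left_comm]

@[simp]
theorem coeff_egf (a : ℕ → R) (n : ℕ) : coeff n (egf a) = algebraMap ℚ R (1 / n !) * a n :=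
  coeff_mk n fun n => algebraMap ℚ R (1 / n !) * a n

theorem isUnit_algebraMap_inv_factorial (n : ℕ) : IsUnit (algebraMap ℚ R (1 / n !)) :=
  (isUnit_iff_ne_zero.mpr (by positivity)).map _

theorem egf_injective : Function.Injective (egf (R := R)) := fun a b h => funext fun n =>
  (isUnit_algebraMap_inv_factorial n).mul_left_cancel (by simpa using congr_arg (coeff n) h)

theorem egf_pow (c : R) : egf (c ^ ·) = rescale c (exp R) := by
  ext n
  simp [coeff_exp, mul_comm]

theorem egf_pow_mul (c : R) (a : ℕ → R) : egf (fun n => c ^ n * a n) = rescale c (egf a) := by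
  ext n
  simp [mul_left_comm]

theorem egf_const_mul (c : R) (a : ℕ → R) : egf (fun n => c * a n) = C c * egf a := by
  rw [← smul_eq_C_mul, ← map_smul]
  rfl

theorem egf_sum {ι : Type*} (s : Finset ι) (a : ι → ℕ → R) :
    egf (fun n => ∑ i ∈ s, a i n) = ∑ i ∈ s, egf (a i) := by
  rw [← map_sum]
  congr 1
  ext n
  simp [Finset.sum_apply]

theorem coeff_egf_mul_egf (a b : ℕ → R) (n : ℕ) :
    coeff n (egf a * egf b) =
      algebraMap ℚ R (1 / n !) * ∑ k ∈ range (n + 1), (n.choose k : R) * a k * b (n - k) := by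
  rw [coeff_mul, Nat.sum_antidiagonal_eq_sum_range_succ_mk, mul_sum]
  refine sum_congr rfl fun k hk => ?_
  have hkn : k ≤ n := Nat.lt_succ_iff.mp (mem_range.mp hk)
  have hfac : (1 / k ! : ℚ) * (1 / (n - k)!) = 1 / n ! * n.choose k := by
    rw [Nat.cast_choose ℚ hkn]
    field_simp
  have hfacR := congr_arg (algebraMap ℚ R) hfac
  rw [map_mul, map_mul, map_natCast] at hfacR
  simp only [coeff_egf]
  linear_combination a k * b (n - k) * hfacR

end PowerSeries

section qBernoulli

variable {R : Type*} [CommRing R] (q L : R)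

theorem qb_recurrence (hq : IsUnit (q - 1)) (n : ℕ) :
    q * ∑ k ∈ range (n + 1), (n.choose k : R) * qb q L k - qb q L n =
      (if n = 1 then 1 else 0) + (if n = 0 then L else 0) := by
  have hinv := Ring.mul_inverse_cancel _ hq
  cases n with
  | zero =>
    simp only [zero_add, sum_range_one, Nat.choose_self, Nat.cast_one, one_mul, zero_ne_one,
      if_false, if_true]
    rw [qb]
    linear_combination L * hinv
  | succ n =>
    rw [sum_range_succ, qb, sum_attach (range (n + 1)) fun k => ((n + 1).choose k : R) * qb q L k]
    simp only [Nat.choose_self, Nat.cast_one, one_mul, add_eq_zero, one_ne_zero, and_false,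
      if_false, add_zero]
    linear_combination ((if n + 1 = 1 then 1 else 0) -
      q * ∑ k ∈ range (n + 1), ((n + 1).choose k : R) * qb q L k) * hinv

variable [Algebra ℚ R]

theorem egf_qb (hq : IsUnit (q - 1)) : (C q * exp R - 1) * egf (qb q L) = X + C L := by
  ext n
  have hexp : exp R = egf 1 := by ext; simp [coeff_exp]
  rw [sub_mul, one_mul, mul_assoc, mul_comm (exp R), hexp, map_sub, coeff_C_mul,
    coeff_egf_mul_egf, coeff_egf, mul_left_comm, ← mul_sub]
  simp only [Pi.one_apply, mul_one, qb_recurrence q L hq]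
  rcases n with _ | _ | n <;> simp [coeff_X]

theorem egf_qB (x : R) : egf (fun n => qB q L n x) = egf (qb q L) * rescale x (exp R) := by
  ext n
  rw [← egf_pow, coeff_egf_mul_egf, coeff_egf, qB]

theorem egf_qb_multiplication (hq : IsUnit (q - 1)) (w : ℕ) (hqw : IsUnit (q ^ w - 1)) :
    C (w : R) * egf (qb q L) =
      rescale (w : R) (egf (qb (q ^ w) (w * L))) * ∑ i ∈ range w, (C q * exp R) ^ i := by
  set E := C q * exp R
  have hE : IsUnit (E - 1) := isUnit_iff_constantCoeff.mpr (by simpa [E] using hq)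
  have hEw : rescale (w : R) (C (q ^ w) * exp R) = E ^ w := by
    rw [map_mul, rescale_C, ← exp_pow_eq_rescale_exp, mul_pow, map_pow]
  apply hE.mul_left_cancel
  calc (E - 1) * (C (w : R) * egf (qb q L))
      = C (w : R) * (X + C L) := by rw [mul_left_comm, egf_qb q L hq]
    _ = rescale (w : R) ((C (q ^ w) * exp R - 1) * egf (qb (q ^ w) (w * L))) := by
      rw [egf_qb _ _ hqw, map_add, rescale_X, rescale_C, map_mul]
      ring
    _ = (E - 1) * (rescale (w : R) (egf (qb (q ^ w) (w * L))) * ∑ i ∈ range w, E ^ i) := by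
      rw [map_mul, map_sub, hEw, map_one, ← geom_sum_mul]
      ring

end qBernoulli

theorem qBernoulli_multiplication {R : Type*} [CommRing R] [Algebra ℚ R] (q L : R)
    (hq : ∀ w : ℕ, 0 < w → IsUnit (q ^ w - 1)) (w : ℕ) (hw : 0 < w) (x : R) (n : ℕ) :
    (w : R) * qB q L n ((w : R) * x)
      = (w : R) ^ n * ∑ i ∈ Finset.range w, q ^ i *
          qB (q ^ w) ((w : R) * L) n (x + algebraMap ℚ R ((i : ℚ) / (w : ℚ))) := by
  set y : ℕ → R := fun i => x + algebraMap ℚ R ((i : ℚ) / (w : ℚ))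
  have hy (i : ℕ) : y i * w = w * x + i := by
    have hwq : (w : ℚ) ≠ 0 := by exact_mod_cast hw.ne'
    rw [add_mul, ← map_natCast (algebraMap ℚ R) w, ← map_mul, div_mul_cancel₀ _ hwq, map_natCast,
      map_natCast, mul_comm]
  set G := egf (qb (q ^ w) (w * L))
  suffices egf (fun n => (w : R) * qB q L n (w * x)) =
      egf (fun n => (w : R) ^ n * ∑ i ∈ range w, q ^ i * qB (q ^ w) (w * L) n (y i)) from
    congr_fun (egf_injective this) n
  calc egf (fun n => (w : R) * qB q L n (w * x))
      = C (w : R) * egf (qb q L) * rescale (w * x) (exp R) := by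
        rw [egf_const_mul, egf_qB, mul_assoc]
    _ = rescale (w : R) G * (∑ i ∈ range w, (C q * exp R) ^ i) *
          rescale (w * x) (exp R) := by
        rw [egf_qb_multiplication q L (by simpa using hq 1 one_pos) w (hq w hw)]
    _ = rescale (w : R) (∑ i ∈ range w, C (q ^ i) * (G * rescale (y i) (exp R))) := by
        simp only [map_sum, map_mul, rescale_C, rescale_rescale, hy, ← exp_mul_exp_eq_exp_add,
          ← exp_pow_eq_rescale_exp, mul_pow, map_pow, sum_mul, mul_sum]
        exact sum_congr rfl fun i _ => by ring
    _ = _ := by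
        simp only [egf_pow_mul, egf_sum, egf_const_mul, egf_qB, G]
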